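/- Stochastic comparison with a binomial (Boland–Singh–Cukic): Let X ~ PB(p_1,...,p_n) and Y ~ Bin(n,p). Then X is stochastically larger than Y (P(X ≥ k) ≥ P(Y ≥ k) for all k) if and only if p ≤ (Π_{i=1}^n p_i)^{1/n}, and X is stochastically smaller than Y (P(X ≥ k) ≤ P(Y ≥ k) for all k) if and only if p ≥ 1 − (Π_{i=1}^n (1−p_i))^{1/n}. Consequently, for X' ~ PB(p'_1,...,p'_n), if (Π_{i=1}^n p_i)^{1/n} ≥ 1 − (Π_{i=1}^n (1−p'_i))^{1/n} then X is stochastically larger than X'. -/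

import Mathlib

open scoped BigOperators

/-- The Poisson binomial probability mass function `PB(p_1, ..., p_n)`. -/
noncomputable def pbPMF (n : ℕ) (p : Fin n → ℝ) (k : ℕ) : ℝ :=
  ∑ A ∈ Finset.powersetCard k (Finset.univ : Finset (Fin n)),
    (∏ i ∈ A, p i) * ∏ i ∈ Aᶜ, (1 - p i)

/-- The binomial probability mass function `Bin(n, p)`. -/
noncomputable def binPMF (n : ℕ) (p : ℝ) (k : ℕ) : ℝ :=
  (n.choose k : ℝ) * p ^ k * (1 - p) ^ (n - k)

/-- The tail probability `P(X ≥ k)` of a distribution supported on `{0, ..., n}`. -/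
noncomputable def tailProb (n : ℕ) (f : ℕ → ℝ) (k : ℕ) : ℝ :=
  ∑ i ∈ Finset.Icc k n, f i

/-!
Identify a law on `{0, …, n}` with its generating function, a polynomial with nonnegative
coefficients, and compare laws through the partial sums of coefficients. `PB(p)` has generating
function `∏ i, (p i • X + (1 - p i))`. Multiplying by a generating function preserves the order
(independent sums), and adding `d • (X - 1)` with `d ≥ 0` moves mass `d` from `0` to `1`.
If `a ≥ g ≥ b`, replacing the Bernoulli factors with parameters `a, b` by `g, ab/g` keeps the
product of the parameters and subtracts `(a + b - g - ab/g) • (X - 1)`, so the law decreases.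
Repeating this until all parameters equal `g` gives `Bin(n, g) ≤ PB(p)` whenever
`gⁿ ≤ ∏ pᵢ`; conversely `P(X = n) = ∏ pᵢ` must be at least `qⁿ`. The second equivalence is the
first one for `n - X ~ PB(1 - p)`, and the consequence compares both laws with
`Bin(n, 1 - (∏ (1 - p'ᵢ))^{1/n})`.
-/

open Polynomial Finset

lemma exists_le_of_pow_card_le_prod {ι R : Type*} [CommSemiring R] [LinearOrder R]
    [IsStrictOrderedRing R] {s : Finset ι} (hs : s.Nonempty) {p : ι → R}
    (hp : ∀ i ∈ s, 0 ≤ p i) {g : R} (hg : 0 ≤ g) (h : g ^ #s ≤ ∏ i ∈ s, p i) :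
    ∃ i ∈ s, g ≤ p i := by
  obtain ⟨i, hi, hmax⟩ := s.exists_max_image p hs
  refine ⟨i, hi, (pow_le_pow_iff_left₀ hg (hp i hi) hs.card_pos.ne').1 ?_⟩
  calc g ^ #s ≤ ∏ j ∈ s, p j := h
    _ ≤ ∏ _j ∈ s, p i := prod_le_prod hp hmax
    _ = p i ^ #s := prod_const _

lemma prod_update_eq_mul_prod_erase {ι α M : Type*} [DecidableEq ι] [CommMonoid M]
    {s : Finset ι} {j : ι} (hj : j ∈ s) (f : α → M) (p : ι → α) (t : α) :
    ∏ k ∈ s, f (Function.update p j t k) = f t * ∏ k ∈ s.erase j, f (p k) := by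
  rw [← mul_prod_erase s _ hj, Function.update_self]
  congr 1
  exact prod_congr rfl fun k hk => by rw [Function.update_of_ne (ne_of_mem_erase hk)]

namespace PGF

noncomputable def bern (a : ℝ) : ℝ[X] := C a * X + C (1 - a)

noncomputable def cdf (P : ℝ[X]) (k : ℕ) : ℝ := ∑ i ∈ range k, P.coeff i

/-- `StochLE P Q`: the law with generating function `Q` stochastically dominates that of `P`
(`cdf P k` is the mass of `{0, …, k - 1}`). -/
def StochLE (P Q : ℝ[X]) : Prop := ∀ k, cdf Q k ≤ cdf P k

local infix:50 " ≼ " => StochLE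

def NonnegCoeffs (P : ℝ[X]) : Prop := ∀ k, 0 ≤ P.coeff k

lemma NonnegCoeffs.mul {P Q : ℝ[X]} (hP : NonnegCoeffs P) (hQ : NonnegCoeffs Q) :
    NonnegCoeffs (P * Q) := fun k => by
  rw [coeff_mul]
  exact sum_nonneg fun x _ => mul_nonneg (hP _) (hQ _)

lemma NonnegCoeffs.prod {ι : Type*} {s : Finset ι} {P : ι → ℝ[X]}
    (h : ∀ i ∈ s, NonnegCoeffs (P i)) : NonnegCoeffs (∏ i ∈ s, P i) :=
  prod_induction P NonnegCoeffs (fun _ _ => NonnegCoeffs.mul)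
    (fun k => by rw [coeff_one]; split_ifs <;> norm_num) h

lemma nonnegCoeffs_bern {a : ℝ} (ha : a ∈ Set.Icc 0 1) : NonnegCoeffs (bern a) := by
  intro k
  simp only [bern, coeff_add, coeff_C_mul_X, coeff_C]
  split_ifs <;> linarith [ha.1, ha.2]

lemma cdf_add (P Q : ℝ[X]) (k : ℕ) : cdf (P + Q) k = cdf P k + cdf Q k := by
  simp only [cdf, coeff_add, sum_add_distrib]

lemma cdf_C_mul (a : ℝ) (P : ℝ[X]) (k : ℕ) : cdf (C a * P) k = a * cdf P k := by
  simp only [cdf, coeff_C_mul, mul_sum]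

lemma cdf_sum {ι : Type*} (s : Finset ι) (P : ι → ℝ[X]) (k : ℕ) :
    cdf (∑ i ∈ s, P i) k = ∑ i ∈ s, cdf (P i) k := by
  simp only [cdf, finsetSum_coeff]
  exact sum_comm

lemma cdf_X_pow_mul (P : ℝ[X]) (j k : ℕ) : cdf (X ^ j * P) k = cdf P (k - j) := by
  simp only [cdf, coeff_X_pow_mul']
  rcases le_total j k with hjk | hkj
  · obtain ⟨m, rfl⟩ := Nat.exists_eq_add_of_le hjk
    rw [sum_range_add, sum_eq_zero fun i hi => if_neg (by simpa using hi)]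
    simp
  · rw [sum_eq_zero fun i hi => if_neg (by simp at hi; omega), Nat.sub_eq_zero_of_le hkj]
    simp

lemma cdf_X_sub_one_nonpos (k : ℕ) : cdf (X - 1) k ≤ 0 := by
  rcases k with _ | _ | k <;> simp [cdf, coeff_one, coeff_X]

lemma StochLE.refl (P : ℝ[X]) : StochLE P P := fun _ => le_rfl

lemma StochLE.trans {P Q R : ℝ[X]} (h₁ : StochLE P Q) (h₂ : StochLE Q R) : StochLE P R :=
  fun k => (h₂ k).trans (h₁ k)

instance : Trans StochLE StochLE StochLE := ⟨StochLE.trans⟩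

lemma StochLE.mul_left {S P Q : ℝ[X]} (hS : NonnegCoeffs S) (h : StochLE P Q) :
    StochLE (S * P) (S * Q) := by
  intro k
  have hconv : ∀ R, cdf (S * R) k = ∑ i ∈ S.support, S.coeff i * cdf R (k - i) := fun R => by
    conv_lhs => rw [S.as_sum_support_C_mul_X_pow, sum_mul]
    simp only [cdf_sum, mul_assoc, cdf_C_mul, cdf_X_pow_mul]
  rw [hconv, hconv]
  exact sum_le_sum fun i _ => mul_le_mul_of_nonneg_left (h _) (hS i)

lemma StochLE.mul_right {S P Q : ℝ[X]} (hS : NonnegCoeffs S) (h : StochLE P Q) :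
    StochLE (P * S) (Q * S) := by
  simpa only [mul_comm _ S] using h.mul_left hS

lemma StochLE.prod {ι : Type*} {s : Finset ι} {P Q : ι → ℝ[X]}
    (hP : ∀ i ∈ s, NonnegCoeffs (P i)) (hQ : ∀ i ∈ s, NonnegCoeffs (Q i))
    (h : ∀ i ∈ s, StochLE (P i) (Q i)) : StochLE (∏ i ∈ s, P i) (∏ i ∈ s, Q i) := by
  classical
  induction s using Finset.induction_on with
  | empty => exact StochLE.refl _
  | insert a s ha ih =>
    simp only [mem_insert, forall_eq_or_imp] at hP hQ h
    rw [prod_insert ha, prod_insert ha]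
    exact (h.1.mul_right (NonnegCoeffs.prod hP.2)).trans
      ((ih hP.2 hQ.2 h.2).mul_left hQ.1)

lemma stochLE_add_C_mul_X_sub_one (P : ℝ[X]) {d : ℝ} (hd : 0 ≤ d) :
    StochLE P (P + C d * (X - 1)) := fun k => by
  rw [cdf_add, cdf_C_mul]
  nlinarith [cdf_X_sub_one_nonpos k]

lemma bern_stochLE_bern {a b : ℝ} (h : a ≤ b) : StochLE (bern a) (bern b) := by
  have : bern b = bern a + C (b - a) * (X - 1) := by
    simp only [bern, map_sub, map_one]; ring
  rw [this]
  exact stochLE_add_C_mul_X_sub_one _ (sub_nonneg.2 h)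

lemma bern_mul_stochLE {a b a' b' : ℝ} (hprod : a * b = a' * b') (hsum : a' + b' ≤ a + b) :
    StochLE (bern a' * bern b') (bern a * bern b) := by
  have hC : C a * C b = C a' * C b' := by rw [← C_mul, ← C_mul, hprod]
  have : bern a * bern b
      = bern a' * bern b' + C (a + b - (a' + b')) * (X - 1) := by
    simp only [bern, map_sub, map_add, map_one]
    linear_combination (X - 1) ^ 2 * hC
  rw [this]
  exact stochLE_add_C_mul_X_sub_one _ (sub_nonneg.2 hsum)


lemma bern_mul_prod_update_stochLE {ι : Type*} [DecidableEq ι] {s : Finset ι} {p : ι → ℝ}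
    (hp : ∀ k ∈ s, p k ∈ Set.Icc 0 1) {i j : ι} (hi : i ∈ s) (hj : j ∈ s.erase i)
    {g t : ℝ} (hg : 0 < g) (hgi : g ≤ p i) (hjg : p j ≤ g) (hgt : g * t = p i * p j) :
    StochLE (bern g * ∏ k ∈ s.erase i, bern (Function.update p j t k))
      (∏ k ∈ s, bern (p k)) := by
  have hsum : g + t ≤ p i + p j := by
    have : g * (p i + p j - (g + t)) = (p i - g) * (g - p j) := by linear_combination -hgt
    nlinarith [mul_nonneg (sub_nonneg.2 hgi) (sub_nonneg.2 hjg)]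
  set R := ∏ k ∈ (s.erase i).erase j, bern (p k)
  have hR : NonnegCoeffs R := NonnegCoeffs.prod fun k hk =>
    nonnegCoeffs_bern (hp k (mem_of_mem_erase (mem_of_mem_erase hk)))
  calc bern g * ∏ k ∈ s.erase i, bern (Function.update p j t k) = bern g * bern t * R := by
        rw [prod_update_eq_mul_prod_erase hj bern, mul_assoc]
    _ ≼ bern (p i) * bern (p j) * R := (bern_mul_stochLE hgt.symm hsum).mul_right hR
    _ = ∏ k ∈ s, bern (p k) := by
        rw [← mul_prod_erase s _ hi, ← mul_prod_erase _ _ hj, mul_assoc]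

theorem bern_pow_stochLE_prod {ι : Type*} (s : Finset ι) (p : ι → ℝ)
    (hp : ∀ i ∈ s, p i ∈ Set.Icc 0 1) {g : ℝ} (hg : 0 ≤ g)
    (hprod : g ^ #s ≤ ∏ i ∈ s, p i) :
    StochLE (bern g ^ #s) (∏ i ∈ s, bern (p i)) := by
  classical
  induction s using Finset.strongInduction generalizing p with
  | H s ih =>
  by_cases hall : ∀ i ∈ s, g ≤ p i
  · rw [← prod_const]
    exact StochLE.prod (fun i hi => nonnegCoeffs_bern ⟨hg, (hall i hi).trans (hp i hi).2⟩)
      (fun i hi => nonnegCoeffs_bern (hp i hi)) fun i hi => bern_stochLE_bern (hall i hi)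
  push Not at hall
  obtain ⟨j, hjs, hjg⟩ := hall
  obtain ⟨i, his, hgi⟩ :=
    exists_le_of_pow_card_le_prod ⟨j, hjs⟩ (fun k hk => (hp k hk).1) hg hprod
  have hg0 : 0 < g := (hp j hjs).1.trans_lt hjg
  have hj : j ∈ s.erase i := mem_erase.2 ⟨ne_of_apply_ne p (hjg.trans_le hgi).ne, hjs⟩
  have hpi := hp i his
  have hpj := hp j hjs
  -- replace `(p i, p j)` by `(g, t)`: same product, smaller sum
  obtain ⟨t, hgt⟩ : ∃ t, g * t = p i * p j := ⟨p i * p j / g, by field_simp⟩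
  have ht : t ∈ Set.Icc 0 1 :=
    ⟨by nlinarith [mul_nonneg hpi.1 hpj.1], by nlinarith [hpi.2, hpj.1]⟩
  have hprod' : g ^ #(s.erase i) ≤ ∏ k ∈ s.erase i, Function.update p j t k := by
    rw [prod_update_of_mem hj, sdiff_singleton_eq_erase]
    rw [← mul_prod_erase s _ his, ← mul_prod_erase _ _ hj, ← card_erase_add_one his,
      pow_succ] at hprod
    refine le_of_mul_le_mul_right ?_ hg0
    linear_combination hprod - (∏ k ∈ (s.erase i).erase j, p k) * hgt
  have IH := ih (s.erase i) (erase_ssubset his) (Function.update p j t) (fun k hk => by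
    rcases eq_or_ne k j with rfl | hkj
    · simpa using ht
    · simpa [hkj] using hp k (mem_of_mem_erase hk)) hprod'
  calc bern g ^ #s = bern g * bern g ^ #(s.erase i) := by
        rw [← pow_succ', card_erase_add_one his]
    _ ≼ bern g * ∏ k ∈ s.erase i, bern (Function.update p j t k) :=
        IH.mul_left (nonnegCoeffs_bern ⟨hg, hgi.trans hpi.2⟩)
    _ ≼ ∏ k ∈ s, bern (p k) := bern_mul_prod_update_stochLE hp his hj hg0 hgi hjg.le hgt

end PGF

open PGF

lemma coeff_prod_bern {ι : Type*} [Fintype ι] [DecidableEq ι] (p : ι → ℝ) (k : ℕ) :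
    (∏ i, bern (p i)).coeff k
      = ∑ A ∈ powersetCard k univ, (∏ i ∈ A, p i) * ∏ i ∈ Aᶜ, (1 - p i) := by
  have hterm : ∀ A : Finset ι, (∏ i ∈ A, C (p i) * X) * ∏ i ∈ univ \ A, C (1 - p i)
      = C ((∏ i ∈ A, p i) * ∏ i ∈ Aᶜ, (1 - p i)) * X ^ #A := fun A => by
    rw [prod_mul_distrib, prod_const, ← compl_eq_univ_sdiff, map_mul, map_prod, map_prod]
    ring
  simp only [bern, prod_add, hterm, finsetSum_coeff, coeff_C_mul_X_pow, ← sum_filter,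
    powersetCard_eq_filter, eq_comm]

lemma natDegree_prod_bern_le {ι : Type*} (s : Finset ι) (p : ι → ℝ) :
    (∏ i ∈ s, bern (p i)).natDegree ≤ #s := by
  refine (natDegree_prod_le s _).trans ?_
  simpa using sum_le_card_nsmul s (fun i => (bern (p i)).natDegree) 1 fun i _ => natDegree_linear_le

lemma eval_one_prod_bern {ι : Type*} (s : Finset ι) (p : ι → ℝ) :
    (∏ i ∈ s, bern (p i)).eval 1 = 1 := by
  simp [bern, eval_prod]

lemma tailProb_coeff {n : ℕ} {P : ℝ[X]} (hP : P.natDegree ≤ n) (k : ℕ) :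
    tailProb n P.coeff k = P.eval 1 - cdf P k := by
  have hN : P.natDegree < max k (n + 1) := by omega
  rw [eval_eq_sum_range' hN, ← sum_range_add_sum_Ico _ (le_max_left k (n + 1)), tailProb, cdf,
    ← Ico_add_one_right_eq_Icc, sum_subset (Ico_subset_Ico_right (le_max_right k (n + 1)))
      fun i hi hi' => coeff_eq_zero_of_natDegree_lt (by simp at hi hi'; omega)]
  simp

lemma tailProb_pbPMF (n : ℕ) (p : Fin n → ℝ) (k : ℕ) :
    tailProb n (pbPMF n p) k = 1 - cdf (∏ i, bern (p i)) k := by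
  have hcoeff : pbPMF n p = (∏ i, bern (p i)).coeff :=
    funext fun k => (coeff_prod_bern p k).symm
  rw [hcoeff, tailProb_coeff, eval_one_prod_bern]
  simpa using natDegree_prod_bern_le univ p

lemma pbPMF_const (n : ℕ) (q : ℝ) : pbPMF n (fun _ => q) = binPMF n q := by
  ext k
  have hterm : ∀ A ∈ powersetCard k (univ : Finset (Fin n)),
      (∏ _i ∈ A, q) * ∏ _i ∈ Aᶜ, (1 - q) = q ^ k * (1 - q) ^ (n - k) := fun A hA => by
    rw [mem_powersetCard] at hA
    rw [prod_const, prod_const, card_compl, hA.2, Fintype.card_fin]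
  rw [pbPMF, sum_congr rfl hterm, sum_const, card_powersetCard, card_univ, Fintype.card_fin,
    nsmul_eq_mul, binPMF, mul_assoc]

lemma tailProb_binPMF (n : ℕ) (q : ℝ) (k : ℕ) :
    tailProb n (binPMF n q) k = 1 - cdf (bern q ^ n) k := by
  rw [← pbPMF_const, tailProb_pbPMF, prod_const, card_univ, Fintype.card_fin]

lemma tailProb_self (n : ℕ) (f : ℕ → ℝ) : tailProb n f n = f n := by
  rw [tailProb, Icc_self, sum_singleton]

lemma pbPMF_self (n : ℕ) (p : Fin n → ℝ) : pbPMF n p n = ∏ i, p i := by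
  have h := powersetCard_self (univ : Finset (Fin n))
  rw [card_univ, Fintype.card_fin] at h
  simp [pbPMF, h]

theorem forall_tailProb_binPMF_le_iff {n : ℕ} {p : Fin n → ℝ}
    (hp : ∀ i, p i ∈ Set.Icc 0 1) {q : ℝ} (hq : 0 ≤ q) :
    (∀ k, tailProb n (binPMF n q) k ≤ tailProb n (pbPMF n p) k) ↔ q ^ n ≤ ∏ i, p i := by
  refine ⟨fun h => ?_, fun h k => ?_⟩
  · simpa [tailProb_self, pbPMF_self, binPMF] using h n
  · rw [tailProb_binPMF, tailProb_pbPMF, sub_le_sub_iff_left]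
    simpa using bern_pow_stochLE_prod univ p (fun i _ => hp i) hq (by simpa using h) k

lemma tailProb_eq_zero (n : ℕ) (f : ℕ → ℝ) {k : ℕ} (hk : n < k) : tailProb n f k = 0 := by
  rw [tailProb, Icc_eq_empty (by omega), sum_empty]

lemma tailProb_congr {n : ℕ} {f g : ℕ → ℝ} (h : ∀ i ≤ n, f i = g i) (k : ℕ) :
    tailProb n f k = tailProb n g k :=
  sum_congr rfl fun i hi => h i (mem_Icc.1 hi).2

lemma tailProb_reflect (n : ℕ) (f : ℕ → ℝ) (k : ℕ) :
    tailProb n (fun i => f (n - i)) k = tailProb n f 0 - tailProb n f (n + 1 - k) := by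
  simp only [tailProb, ← Ico_add_one_right_eq_Icc]
  rw [sum_Ico_reflect f k le_rfl, Nat.sub_self, eq_sub_iff_add_eq,
    sum_Ico_consecutive f (Nat.zero_le _) (Nat.sub_le _ _)]

lemma forall_tailProb_le_iff_reflect {n : ℕ} {f g : ℕ → ℝ}
    (h : tailProb n f 0 = tailProb n g 0) :
    (∀ k, tailProb n f k ≤ tailProb n g k) ↔
      ∀ k, tailProb n (fun i => g (n - i)) k ≤ tailProb n (fun i => f (n - i)) k := by
  simp only [tailProb_reflect, h, sub_le_sub_iff_left]
  refine ⟨fun hfg k => hfg _, fun hfg k => ?_⟩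
  rcases le_or_gt k n with hk | hk
  · simpa [Nat.sub_sub_self (by omega : k ≤ n + 1)] using hfg (n + 1 - k)
  · rw [tailProb_eq_zero n f hk, tailProb_eq_zero n g hk]

lemma pbPMF_one_sub {n k : ℕ} (p : Fin n → ℝ) (hk : k ≤ n) :
    pbPMF n (fun i => 1 - p i) k = pbPMF n p (n - k) := by
  refine sum_nbij' compl compl (fun A hA => ?_) (fun A hA => ?_) (fun A _ => compl_compl A)
    (fun A _ => compl_compl A) (fun A _ => ?_)
  · simp_all [card_compl]
  · simp_all [card_compl, Nat.sub_sub_self hk]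
  · simp only [sub_sub_cancel, compl_compl, mul_comm]

lemma tailProb_pbPMF_one_sub (n : ℕ) (p : Fin n → ℝ) (k : ℕ) :
    tailProb n (pbPMF n fun i => 1 - p i) k = tailProb n (fun i => pbPMF n p (n - i)) k :=
  tailProb_congr (fun _ hi => pbPMF_one_sub p hi) k

lemma pow_le_prod_iff_le_rpow_inv {n : ℕ} {x : Fin n → ℝ} (hx : ∀ i, 0 ≤ x i) {q : ℝ}
    (hq : q ∈ Set.Icc 0 1) : q ^ n ≤ ∏ i, x i ↔ q ≤ (∏ i, x i) ^ (n : ℝ)⁻¹ := by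
  rcases eq_or_ne n 0 with rfl | hn
  · simp [hq.2]
  · rw [Real.le_rpow_inv_iff_of_pos hq.1 (prod_nonneg fun i _ => hx i) (by positivity),
      Real.rpow_natCast]

theorem forall_tailProb_le_binPMF_iff {n : ℕ} {p : Fin n → ℝ}
    (hp : ∀ i, p i ∈ Set.Icc 0 1) {q : ℝ} (hq : q ≤ 1) :
    (∀ k, tailProb n (pbPMF n p) k ≤ tailProb n (binPMF n q) k) ↔
      (1 - q) ^ n ≤ ∏ i, (1 - p i) := by
  have hmass : tailProb n (pbPMF n p) 0 = tailProb n (binPMF n q) 0 := by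
    rw [tailProb_pbPMF, tailProb_binPMF, cdf, cdf, sum_range_zero, sum_range_zero]
  rw [forall_tailProb_le_iff_reflect hmass, ← forall_tailProb_binPMF_le_iff
    (fun i => ⟨sub_nonneg.2 (hp i).2, sub_le_self _ (hp i).1⟩) (sub_nonneg.2 hq)]
  simp only [tailProb_pbPMF_one_sub, ← pbPMF_const]

lemma prod_rpow_inv_mem_Icc {n : ℕ} {x : Fin n → ℝ} (hx : ∀ i, x i ∈ Set.Icc 0 1) :
    (∏ i, x i) ^ (n : ℝ)⁻¹ ∈ Set.Icc 0 1 :=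
  ⟨Real.rpow_nonneg (prod_nonneg fun i _ => (hx i).1) _,
    Real.rpow_le_one (prod_nonneg fun i _ => (hx i).1) (prod_le_one (fun i _ => (hx i).1)
      fun i _ => (hx i).2) (by positivity)⟩

theorem forall_tailProb_binPMF_le_iff_le_rpow {n : ℕ} {p : Fin n → ℝ}
    (hp : ∀ i, p i ∈ Set.Icc 0 1) {q : ℝ} (hq : q ∈ Set.Icc 0 1) :
    (∀ k, tailProb n (binPMF n q) k ≤ tailProb n (pbPMF n p) k) ↔
      q ≤ (∏ i, p i) ^ (n : ℝ)⁻¹ :=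
  (forall_tailProb_binPMF_le_iff hp hq.1).trans (pow_le_prod_iff_le_rpow_inv (fun i => (hp i).1) hq)

theorem forall_tailProb_le_binPMF_iff_le {n : ℕ} {p : Fin n → ℝ}
    (hp : ∀ i, p i ∈ Set.Icc 0 1) {q : ℝ} (hq : q ∈ Set.Icc 0 1) :
    (∀ k, tailProb n (pbPMF n p) k ≤ tailProb n (binPMF n q) k) ↔
      1 - (∏ i, (1 - p i)) ^ (n : ℝ)⁻¹ ≤ q := by
  rw [forall_tailProb_le_binPMF_iff hp hq.2, pow_le_prod_iff_le_rpow_inv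
    (fun i => sub_nonneg.2 (hp i).2) ⟨sub_nonneg.2 hq.2, sub_le_self _ hq.1⟩, sub_le_comm]

/-- Stochastic comparison with a binomial (Boland–Singh–Cukic): for
`X ~ PB(p_1, ..., p_n)` and `Y ~ Bin(n, q)`: `X` is stochastically larger than `Y` iff
`q ≤ (Π p_i)^{1/n}`; `X` is stochastically smaller than `Y` iff
`q ≥ 1 - (Π (1 - p_i))^{1/n}`. Consequently, for `X' ~ PB(p'_1, ..., p'_n)`, if
`(Π p_i)^{1/n} ≥ 1 - (Π (1 - p'_i))^{1/n}` then `X` is stochastically larger than `X'`. -/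
theorem boland_singh_cukic (n : ℕ) (p p' : Fin n → ℝ)
    (hp : ∀ i, 0 ≤ p i ∧ p i ≤ 1) (hp' : ∀ i, 0 ≤ p' i ∧ p' i ≤ 1)
    (q : ℝ) (hq : 0 ≤ q ∧ q ≤ 1) :
    ((∀ k : ℕ, tailProb n (binPMF n q) k ≤ tailProb n (pbPMF n p) k) ↔
      q ≤ (∏ i, p i) ^ ((n : ℝ)⁻¹)) ∧
    ((∀ k : ℕ, tailProb n (pbPMF n p) k ≤ tailProb n (binPMF n q) k) ↔
      1 - (∏ i, (1 - p i)) ^ ((n : ℝ)⁻¹) ≤ q) ∧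
    (1 - (∏ i, (1 - p' i)) ^ ((n : ℝ)⁻¹) ≤ (∏ i, p i) ^ ((n : ℝ)⁻¹) →
      ∀ k : ℕ, tailProb n (pbPMF n p') k ≤ tailProb n (pbPMF n p) k) := by
  refine ⟨forall_tailProb_binPMF_le_iff_le_rpow hp hq, forall_tailProb_le_binPMF_iff_le hp hq,
    fun h k => ?_⟩
  have hG := prod_rpow_inv_mem_Icc fun i => ⟨sub_nonneg.2 (hp' i).2, sub_le_self _ (hp' i).1⟩
  have hr : 1 - (∏ i, (1 - p' i)) ^ (n : ℝ)⁻¹ ∈ Set.Icc 0 1 :=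
    ⟨sub_nonneg.2 hG.2, sub_le_self _ hG.1⟩
  exact ((forall_tailProb_le_binPMF_iff_le hp' hr).2 le_rfl k).trans
    ((forall_tailProb_binPMF_le_iff_le_rpow hp hr).2 h k)
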